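/- Let X be a topological space whose topology is generated by a normal quasi-uniformity (i.e., there exists a quasi-uniformity 𝓤 on X which is normal and such that for every x ∈ X the sets B(x;U) = {y : (x,y) ∈ U}, U ∈ 𝓤, form a neighborhood base at x). If X is semiregular, then X is completely regular. -/

import Mathlib

open Topology

/-- `B(A;U)`, the `U`-neighborhood of a set `A`. -/
def setBall {X : Type*} (A : Set X) (U : Set (X × X)) : Set X :=
  {y : X | ∃ a ∈ A, (a, y) ∈ U}

/-- A quasi-uniformity on `X` is a filter on `X × X` all of whose members contain
the diagonal, such that every member `U` contains a composition `V ○ V ⊆ U` of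
some member `V` with itself. -/
def IsQuasiUniformity {X : Type*} (𝓤 : Filter (X × X)) : Prop :=
  (∀ U ∈ 𝓤, SetRel.id ⊆ U) ∧ (∀ U ∈ 𝓤, ∃ V ∈ 𝓤, SetRel.comp V V ⊆ U)

/-- A quasi-uniformity on a topological space is normal if
`closure A ⊆ interior (closure B(A;U))` for all `A` and all entourages `U`. -/
def IsNormalQuasiUniformity {X : Type*} [TopologicalSpace X]
    (𝓤 : Filter (X × X)) : Prop :=
  ∀ A : Set X, ∀ U ∈ 𝓤, closure A ⊆ interior (closure (setBall A U))

/-- A quasi-uniformity generates the topology of `X` if for every `x` the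
neighborhood filter of `x` is the filter generated by the balls
`B(x;U) = {y | (x,y) ∈ U}`, `U ∈ 𝓤`. -/
def GeneratesTopology {X : Type*} [TopologicalSpace X]
    (𝓤 : Filter (X × X)) : Prop :=
  ∀ x : X, 𝓝 x = 𝓤.lift' (fun U => {y : X | (x, y) ∈ U})

/-- A topological space is semiregular if every neighborhood `O` of a point `x`
contains `interior (closure U)` for some neighborhood `U` of `x`. -/
def Semiregular (X : Type*) [TopologicalSpace X] : Prop :=
  ∀ x : X, ∀ O ∈ 𝓝 x, ∃ U ∈ 𝓝 x, interior (closure U) ⊆ O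

/-! Run Urysohn's construction on pairs `(C, U)` with `C ⊆ closure A` and
`closure B(A;W) ⊆ U` for some set `A` and entourage `W`. Normality squeezes
`interior (closure B(A;V))` between `C` and `U` whenever `V ○ V ⊆ W`, and both halves are again
of this form, so the dyadic subdivision never gets stuck. Semiregularity and the fact that `𝓤`
generates the topology provide such a pair with `C = closure {x}` and `U` disjoint from a given
closed set `K ∌ x`. -/

open Set Filter unitInterval

section QuasiUniformity

variable {X : Type*}

theorem setBall_mono {A : Set X} {U V : Set (X × X)} (h : U ⊆ V) :
    setBall A U ⊆ setBall A V :=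
  fun _ ⟨a, ha, hay⟩ => ⟨a, ha, h hay⟩

theorem setBall_setBall (A : Set X) (U V : Set (X × X)) :
    setBall (setBall A U) V = setBall A (SetRel.comp U V) := by
  ext z
  constructor
  · rintro ⟨y, ⟨a, ha, hay⟩, hyz⟩
    exact ⟨a, ha, y, hay, hyz⟩
  · rintro ⟨a, ha, y, hay, hyz⟩
    exact ⟨y, ⟨a, ha, hay⟩, hyz⟩

variable [TopologicalSpace X] {𝓤 : Filter (X × X)}

theorem IsNormalQuasiUniformity.closure_setBall_subset_interior_closure_setBall_comp
    (hn : IsNormalQuasiUniformity 𝓤) (A : Set X) (V : Set (X × X)) {W : Set (X × X)}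
    (hW : W ∈ 𝓤) :
    closure (setBall A V) ⊆ interior (closure (setBall A (SetRel.comp V W))) := by
  simpa only [setBall_setBall] using hn (setBall A V) W hW

theorem Semiregular.exists_interior_closure_setBall_subset (hs : Semiregular X)
    (hg : GeneratesTopology 𝓤) {x : X} {O : Set X} (hO : O ∈ 𝓝 x) :
    ∃ U ∈ 𝓤, interior (closure (setBall {x} U)) ⊆ O := by
  obtain ⟨N, hN, hNO⟩ := hs x O hO
  rw [hg x] at hN
  obtain ⟨U, hU, hUN⟩ := (mem_lift'_sets (h := fun U => {y | (x, y) ∈ U})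
    fun _ _ hUV _ hy => hUV hy).mp hN
  refine ⟨U, hU, (interior_mono (closure_mono ?_)).trans hNO⟩
  rintro y ⟨_, rfl, hy⟩
  exact hUN hy

def BallSeparates (𝓤 : Filter (X × X)) (c u : Set X) : Prop :=
  ∃ A : Set X, ∃ W ∈ 𝓤, c ⊆ closure A ∧ closure (setBall A W) ⊆ u

namespace BallSeparates

theorem mono_left {c c' u : Set X} (h : BallSeparates 𝓤 c u) (hc : c' ⊆ c) :
    BallSeparates 𝓤 c' u :=
  let ⟨A, W, hW, hcA, hAu⟩ := h
  ⟨A, W, hW, hc.trans hcA, hAu⟩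

theorem subset {c u : Set X} (hn : IsNormalQuasiUniformity 𝓤) (h : BallSeparates 𝓤 c u) :
    c ⊆ u :=
  let ⟨A, W, hW, hcA, hAu⟩ := h
  hcA.trans <| (hn A W hW).trans <| interior_subset.trans hAu

theorem closure_interior_closure_setBall (hq : IsQuasiUniformity 𝓤)
    (hn : IsNormalQuasiUniformity 𝓤) (A : Set X) {U : Set (X × X)} (hU : U ∈ 𝓤) :
    BallSeparates 𝓤 (closure A) (interior (closure (setBall A U))) := by
  obtain ⟨V, hV, hVU⟩ := hq.2 U hU
  refine ⟨A, V, hV, subset_rfl, ?_⟩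
  exact (hn.closure_setBall_subset_interior_closure_setBall_comp A V hV).trans
    (interior_mono (closure_mono (setBall_mono hVU)))

theorem exists_between (hq : IsQuasiUniformity 𝓤) (hn : IsNormalQuasiUniformity 𝓤)
    {c u : Set X} (h : BallSeparates 𝓤 c u) :
    ∃ v, IsOpen v ∧ c ⊆ v ∧ closure v ⊆ u ∧ BallSeparates 𝓤 c v ∧
      BallSeparates 𝓤 (closure v) u := by
  obtain ⟨A, W, hW, hcA, hAu⟩ := h
  obtain ⟨V, hV, hVW⟩ := hq.2 W hW
  have hright : BallSeparates 𝓤 (closure (interior (closure (setBall A V)))) u := by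
    refine ⟨setBall A V, V, hV, isClosed_closure.closure_interior_subset, ?_⟩
    rw [setBall_setBall]
    exact (closure_mono (setBall_mono hVW)).trans hAu
  exact ⟨_, isOpen_interior, hcA.trans (hn A V hV), hright.subset hn,
    (closure_interior_closure_setBall hq hn A hV).mono_left hcA, hright⟩

end BallSeparates

theorem exists_continuous_zero_one_of_ballSeparates (hq : IsQuasiUniformity 𝓤)
    (hn : IsNormalQuasiUniformity 𝓤) {c u : Set X} (hc : IsClosed c) (hu : IsOpen u)
    (h : BallSeparates 𝓤 c u) :
    ∃ f : X → I, Continuous f ∧ EqOn f 0 c ∧ EqOn f 1 uᶜ := by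
  let pair : Urysohns.CU (BallSeparates 𝓤) :=
    { C := c
      U := u
      P_C_U := h
      closed_C := hc
      open_U := hu
      subset := h.subset hn
      hP := fun _ hcu _ _ => hcu.exists_between hq hn }
  exact ⟨fun x => ⟨pair.lim x, pair.lim_mem_Icc x⟩, pair.continuous_lim.subtype_mk _,
    fun x hx => Subtype.ext (pair.lim_of_mem_C x hx),
    fun x hx => Subtype.ext (pair.lim_of_notMem_U x hx)⟩

end QuasiUniformity

/-- If the topology of `X` is generated by a normal
quasi-uniformity and `X` is semiregular, then `X` is completely regular. -/
theorem completelyRegular_of_semiregular_normally_quasiUniformizable {X : Type*}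
    [TopologicalSpace X]
    (h : ∃ 𝓤 : Filter (X × X), IsQuasiUniformity 𝓤 ∧ IsNormalQuasiUniformity 𝓤 ∧
      GeneratesTopology 𝓤)
    (hs : Semiregular X) : CompletelyRegularSpace X := by
  obtain ⟨𝓤, hq, hn, hg⟩ := h
  refine ⟨fun x K hK hxK => ?_⟩
  obtain ⟨U, hU, hUK⟩ :=
    hs.exists_interior_closure_setBall_subset hg (hK.isOpen_compl.mem_nhds hxK)
  obtain ⟨f, hf, hf0, hf1⟩ := exists_continuous_zero_one_of_ballSeparates hq hn
    isClosed_closure isOpen_interior (BallSeparates.closure_interior_closure_setBall hq hn {x} hU)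
  exact ⟨f, hf, hf0 (subset_closure rfl), fun y hy => hf1 fun hyU => hUK hyU hy⟩
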